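/- Let p ≥ 2 be an integer. A tricomplex number c = (c₁, c₂) ∈ 𝕄(3) belongs to M₃^p if and only if both bicomplex numbers c₁ − c₂·i₂ and c₁ + c₂·i₂ belong to M₂^p (products taken in the ring 𝕄(2)). Equivalently, M₃^p is the 𝕄(3)-cartesian product M₂^p ×_{γ₃} M₂^p. -/

import Mathlib

/-- Bicomplex multiplication on ℂ × ℂ. -/
def bcMul (z w : ℂ × ℂ) : ℂ × ℂ := (z.1 * w.1 - z.2 * w.2, z.1 * w.2 + z.2 * w.1)

/-- n-th power of a bicomplex number. -/
def bcPow (z : ℂ × ℂ) : ℕ → ℂ × ℂ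
  | 0 => (1, 0)
  | n + 1 => bcMul (bcPow z n) z

/-- The bicomplex norm ‖(z₁,z₂)‖₂ = √(|z₁|² + |z₂|²). -/
noncomputable def bcNorm (z : ℂ × ℂ) : ℝ :=
  Real.sqrt (‖z.1‖ ^ 2 + ‖z.2‖ ^ 2)

/-- The bicomplex polynomial Q_{p,c}(ζ) = ζ^p + c. -/
def bcQ (p : ℕ) (c : ℂ × ℂ) (z : ℂ × ℂ) : ℂ × ℂ := bcPow z p + c

/-- The bicomplex Multibrot set M₂^p. -/
def M2 (p : ℕ) : Set (ℂ × ℂ) :=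
  {c | ∃ M : ℝ, ∀ m : ℕ, 1 ≤ m → bcNorm ((bcQ p c)^[m] (0, 0)) ≤ M}

/-- The unit i₂ = (0,1) of 𝕄(2). -/
def i2 : ℂ × ℂ := (0, 1)

/-- Tricomplex multiplication on 𝕄(2) × 𝕄(2). -/
def tcMul (z w : (ℂ × ℂ) × (ℂ × ℂ)) : (ℂ × ℂ) × (ℂ × ℂ) :=
  (bcMul z.1 w.1 - bcMul z.2 w.2, bcMul z.1 w.2 + bcMul z.2 w.1)

/-- n-th power of a tricomplex number. -/
def tcPow (z : (ℂ × ℂ) × (ℂ × ℂ)) : ℕ → (ℂ × ℂ) × (ℂ × ℂ)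
  | 0 => ((1, 0), (0, 0))
  | n + 1 => tcMul (tcPow z n) z

/-- The tricomplex norm ‖(ζ₁,ζ₂)‖₃ = √(‖ζ₁‖₂² + ‖ζ₂‖₂²). -/
noncomputable def tcNorm (z : (ℂ × ℂ) × (ℂ × ℂ)) : ℝ :=
  Real.sqrt (bcNorm z.1 ^ 2 + bcNorm z.2 ^ 2)

/-- The tricomplex polynomial Q_{p,c}(η) = η^p + c. -/
def tcQ (p : ℕ) (c : (ℂ × ℂ) × (ℂ × ℂ)) (z : (ℂ × ℂ) × (ℂ × ℂ)) :
    (ℂ × ℂ) × (ℂ × ℂ) := tcPow z p + c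

/-- The tricomplex Multibrot set M₃^p. -/
def M3 (p : ℕ) : Set ((ℂ × ℂ) × (ℂ × ℂ)) :=
  {c | ∃ M : ℝ, ∀ m : ℕ, 1 ≤ m → tcNorm ((tcQ p c)^[m] ((0, 0), (0, 0))) ≤ M}

/-!
Substituting `i₃ ↦ ±i₂` (both square roots of `-1` in `𝕄(2)`) gives ring homomorphisms
`𝕄(3) → 𝕄(2)`, `(ζ₁, ζ₂) ↦ ζ₁ ± ζ₂ i₂`, which conjugate `Q_{p,c}` to `Q_{p,c₁ ± c₂ i₂}` and
hence map the tricomplex orbit of `0` onto the two bicomplex ones. By the parallelogram law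
the squared norms of the two images add up to twice the squared tricomplex norm, so the
tricomplex orbit is bounded iff both bicomplex orbits are.
-/

/-- The tricomplex number `z = z.1 + z.2 i₃` with `i₃` replaced by `u`. -/
def tcSubst (u : ℂ × ℂ) (z : (ℂ × ℂ) × (ℂ × ℂ)) : ℂ × ℂ := z.1 + bcMul z.2 u

lemma bcMul_neg_right (z w : ℂ × ℂ) : bcMul z (-w) = -bcMul z w := by
  simp only [bcMul, Prod.fst_neg, Prod.snd_neg, Prod.neg_mk]
  congr 1 <;> ring

lemma bcMul_i2_i2 : bcMul i2 i2 = (-1, 0) := by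
  simp [bcMul, i2]

lemma bcMul_neg_i2_neg_i2 : bcMul (-i2) (-i2) = (-1, 0) := by
  simp [bcMul, i2]

section Subst

variable {u : ℂ × ℂ}

lemma tcSubst_add (z w : (ℂ × ℂ) × (ℂ × ℂ)) : tcSubst u (z + w) = tcSubst u z + tcSubst u w := by
  simp only [tcSubst, bcMul, Prod.fst_add, Prod.snd_add, Prod.ext_iff]
  constructor <;> ring

lemma tcSubst_tcMul (hu : bcMul u u = (-1, 0)) (z w : (ℂ × ℂ) × (ℂ × ℂ)) :
    tcSubst u (tcMul z w) = bcMul (tcSubst u z) (tcSubst u w) := by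
  obtain ⟨hre, him⟩ := Prod.ext_iff.mp hu
  simp only [bcMul] at hre him
  simp only [tcSubst, tcMul, bcMul, Prod.fst_add, Prod.snd_add, Prod.fst_sub, Prod.snd_sub,
    Prod.ext_iff]
  constructor
  · linear_combination
      -(z.2.1 * w.2.1 - z.2.2 * w.2.2) * hre + (z.2.1 * w.2.2 + z.2.2 * w.2.1) * him
  · linear_combination
      -(z.2.1 * w.2.2 + z.2.2 * w.2.1) * hre - (z.2.1 * w.2.1 - z.2.2 * w.2.2) * him

lemma tcSubst_tcPow (hu : bcMul u u = (-1, 0)) (z : (ℂ × ℂ) × (ℂ × ℂ)) (n : ℕ) :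
    tcSubst u (tcPow z n) = bcPow (tcSubst u z) n := by
  induction n with
  | zero => simp [tcSubst, tcPow, bcPow, bcMul]
  | succ n ih => rw [tcPow, bcPow, tcSubst_tcMul hu, ih]

lemma tcSubst_iterate_tcQ (hu : bcMul u u = (-1, 0)) (p : ℕ) (c : (ℂ × ℂ) × (ℂ × ℂ)) (m : ℕ) :
    tcSubst u ((tcQ p c)^[m] ((0, 0), (0, 0))) = (bcQ p (tcSubst u c))^[m] (0, 0) := by
  induction m with
  | zero => simp [tcSubst, bcMul]
  | succ m ih =>
    rw [Function.iterate_succ_apply', Function.iterate_succ_apply', tcQ, bcQ, tcSubst_add,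
      tcSubst_tcPow hu, ih]

end Subst

lemma bcNorm_eq_norm_toLp (z : ℂ × ℂ) : bcNorm z = ‖WithLp.toLp 2 z‖ :=
  (WithLp.prod_norm_eq_of_L2 _).symm

lemma bcNorm_bcMul_i2 (z : ℂ × ℂ) : bcNorm (bcMul z i2) = bcNorm z := by
  simp [bcNorm, bcMul, i2, add_comm]

lemma tcNorm_sq (z : (ℂ × ℂ) × (ℂ × ℂ)) : tcNorm z ^ 2 = bcNorm z.1 ^ 2 + bcNorm z.2 ^ 2 :=
  Real.sq_sqrt (by positivity)

lemma bcNorm_add_sq_add_bcNorm_sub_sq (z w : ℂ × ℂ) :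
    bcNorm (z + w) ^ 2 + bcNorm (z - w) ^ 2 = 2 * (bcNorm z ^ 2 + bcNorm w ^ 2) := by
  simp only [bcNorm_eq_norm_toLp, WithLp.toLp_add, WithLp.toLp_sub]
  exact parallelogram_law_with_norm ℂ _ _

lemma bcNorm_tcSubst_neg_i2_sq_add_sq (z : (ℂ × ℂ) × (ℂ × ℂ)) :
    bcNorm (tcSubst (-i2) z) ^ 2 + bcNorm (tcSubst i2 z) ^ 2 = 2 * tcNorm z ^ 2 := by
  rw [add_comm, tcSubst, tcSubst, bcMul_neg_right, ← sub_eq_add_neg,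
    bcNorm_add_sq_add_bcNorm_sub_sq, bcNorm_bcMul_i2, tcNorm_sq]

lemma bddOn_iff_of_sq_add_sq {ι : Type*} (P : ι → Prop) {a b t : ι → ℝ}
    (ha : ∀ i, 0 ≤ a i) (hb : ∀ i, 0 ≤ b i) (ht : ∀ i, 0 ≤ t i)
    (h : ∀ i, a i ^ 2 + b i ^ 2 = 2 * t i ^ 2) :
    (∃ M, ∀ i, P i → t i ≤ M) ↔ (∃ M, ∀ i, P i → a i ≤ M) ∧ (∃ M, ∀ i, P i → b i ≤ M) := by
  have ha_le (i) : a i ≤ 2 * t i := by nlinarith [ha i, hb i, ht i, h i]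
  have hb_le (i) : b i ≤ 2 * t i := by nlinarith [ha i, hb i, ht i, h i]
  have ht_le (i) : t i ≤ a i + b i := by nlinarith [ha i, hb i, ht i, h i]
  constructor
  · rintro ⟨M, hM⟩
    exact ⟨⟨2 * M, fun i hi => (ha_le i).trans (by linarith [hM i hi])⟩,
      ⟨2 * M, fun i hi => (hb_le i).trans (by linarith [hM i hi])⟩⟩
  · rintro ⟨⟨A, hA⟩, ⟨B, hB⟩⟩
    exact ⟨A + B, fun i hi => (ht_le i).trans (add_le_add (hA i hi) (hB i hi))⟩

theorem tricomplex_multibrot_cartesian_general (p : ℕ) (c₁ c₂ : ℂ × ℂ) :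
    (c₁, c₂) ∈ M3 p ↔ c₁ - bcMul c₂ i2 ∈ M2 p ∧ c₁ + bcMul c₂ i2 ∈ M2 p := by
  have hminus : c₁ - bcMul c₂ i2 = tcSubst (-i2) (c₁, c₂) := by
    rw [tcSubst, bcMul_neg_right, sub_eq_add_neg]
  have hplus : c₁ + bcMul c₂ i2 = tcSubst i2 (c₁, c₂) := rfl
  simp only [M2, M3, Set.mem_ofPred_eq, hminus, hplus,
    ← tcSubst_iterate_tcQ bcMul_i2_i2, ← tcSubst_iterate_tcQ bcMul_neg_i2_neg_i2]
  exact bddOn_iff_of_sq_add_sq _ (fun _ => Real.sqrt_nonneg _) (fun _ => Real.sqrt_nonneg _)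
    (fun _ => Real.sqrt_nonneg _) fun _ => bcNorm_tcSubst_neg_i2_sq_add_sq _

theorem tricomplex_multibrot_cartesian (p : ℕ) (hp : 2 ≤ p) (c₁ c₂ : ℂ × ℂ) :
    (c₁, c₂) ∈ M3 p ↔ c₁ - bcMul c₂ i2 ∈ M2 p ∧ c₁ + bcMul c₂ i2 ∈ M2 p :=
  tricomplex_multibrot_cartesian_general p c₁ c₂
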